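/- arXiv:math/0410172 — 4 statements merged into one kernel-verified Lean document; each statement's English description precedes it below -/
import Mathlib

section
/- If a probability measure μ on (E,d) satisfies T_1(C), then for every δ ∈ (0, 1/(4C)) one has ∬_{E×E} exp(δ·d(x,y)²) dμ(x) dμ(y) < +∞. Moreover, for every c ∈ (0, 1/(2C)) and every x₀ ∈ E, ∫_E exp(c·d(x,x₀)²) dμ(x) < +∞. -/
open MeasureTheory ProbabilityTheory ENNReal
open Filter

noncomputable section

/-- `π` is a coupling of `μ` and `ν`. -/
def IsCoupling {E F : Type*} [MeasurableSpace E] [MeasurableSpace F]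
    (π : Measure (E × F)) (μ : Measure E) (ν : Measure F) : Prop :=
  π.map Prod.fst = μ ∧ π.map Prod.snd = ν

/-- The `L^p`-Wasserstein distance associated to the cost function `d`, valued in `ℝ≥0∞`. -/
def wassersteinDist {E : Type*} [MeasurableSpace E] (p : ℝ) (d : E → E → ℝ)
    (μ ν : Measure E) : ℝ≥0∞ :=
  ⨅ (π : Measure (E × E)) (_ : IsCoupling π μ ν),
    (∫⁻ z, ENNReal.ofReal (d z.1 z.2) ^ p ∂π) ^ (1 / p)

/-- The `L^p`-Wasserstein distance for an extended (`ℝ≥0∞`-valued) pseudo-metric `d`. -/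
def wassersteinDistE {E : Type*} [MeasurableSpace E] (p : ℝ) (d : E → E → ℝ≥0∞)
    (μ ν : Measure E) : ℝ≥0∞ :=
  ⨅ (π : Measure (E × E)) (_ : IsCoupling π μ ν),
    (∫⁻ z, d z.1 z.2 ^ p ∂π) ^ (1 / p)

open Classical in
/-- Relative entropy (Kullback information) `H(ν | μ)`, valued in `ℝ≥0∞`. -/
def relEntropy {E : Type*} [MeasurableSpace E] (ν μ : Measure E) : ℝ≥0∞ :=
  if ν ≪ μ ∧ Integrable (fun x => Real.log ((ν.rnDeriv μ x).toReal)) ν then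
    ENNReal.ofReal (∫ x, Real.log ((ν.rnDeriv μ x).toReal) ∂ν)
  else ∞

/-- The transportation cost-information inequality `T_p(C)` for `μ` on `(E, d)`:
`W_p(μ, ν) ≤ √(2 C H(ν|μ))` for every probability measure `ν`, written in the equivalent
squared form `W_p(μ,ν)² ≤ 2C·H(ν|μ)` in `ℝ≥0∞`. -/
def TpIneq {E : Type*} [MeasurableSpace E] (p : ℝ) (d : E → E → ℝ) (C : ℝ)
    (μ : Measure E) : Prop :=
  ∀ ν : Measure E, IsProbabilityMeasure ν →
    wassersteinDist p d μ ν ^ 2 ≤ ENNReal.ofReal (2 * C) * relEntropy ν μ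

/-- The transportation cost-information inequality `T_p(C)` for an extended pseudo-metric. -/
def TpIneqE {E : Type*} [MeasurableSpace E] (p : ℝ) (d : E → E → ℝ≥0∞) (C : ℝ)
    (μ : Measure E) : Prop :=
  ∀ ν : Measure E, IsProbabilityMeasure ν →
    wassersteinDistE p d μ ν ^ 2 ≤ ENNReal.ofReal (2 * C) * relEntropy ν μ

lemma relEntropy_cond {E : Type*} [MeasurableSpace E] (μ : Measure E) [IsProbabilityMeasure μ]
    {B : Set E} (hB : MeasurableSet B) (hβ : μ B ≠ 0) :
    relEntropy ((μ B)⁻¹ • μ.restrict B) μ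
      = ENNReal.ofReal (- Real.log ((μ B).toReal)) := by
  set ν : Measure E := (μ B)⁻¹ • μ.restrict B with hν
  have hβtop : μ B ≠ ∞ := measure_ne_top μ B
  have hinv_ne_top : (μ B)⁻¹ ≠ ∞ := by simpa using hβ
  have hac : ν ≪ μ := (Measure.absolutelyContinuous_of_le Measure.restrict_le_self).smul_left _
  have hrd : ν.rnDeriv μ =ᵐ[μ] fun x => (μ B)⁻¹ * B.indicator 1 x := by
    filter_upwards [Measure.rnDeriv_smul_left_of_ne_top (μ.restrict B) μ hinv_ne_top,
      Measure.rnDeriv_restrict_self μ hB] with x h1 h2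
    simp [hν, h1, h2]
  have hνB : ν Bᶜ = 0 := by
    simp [hν, Measure.restrict_apply (hB.compl), Set.compl_inter_self]
  have haeB : ∀ᵐ x ∂ν, x ∈ B := by
    rw [ae_iff]; exact hνB
  have hrdν : (fun x => Real.log ((ν.rnDeriv μ x).toReal))
      =ᵐ[ν] fun _ => Real.log ((μ B).toReal)⁻¹ := by
    filter_upwards [hac.ae_eq hrd, haeB] with x h1 h2
    rw [h1]; simp [Set.indicator_of_mem h2, ENNReal.toReal_inv]
  have hνuniv : ν Set.univ = 1 := by
    simp [hν, Measure.restrict_apply, ENNReal.inv_mul_cancel hβ hβtop]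
  have : IsProbabilityMeasure ν := ⟨hνuniv⟩
  have hint : Integrable (fun x => Real.log ((ν.rnDeriv μ x).toReal)) ν :=
    (integrable_const _).congr hrdν.symm
  rw [relEntropy, if_pos ⟨hac, hint⟩, integral_congr_ae hrdν]
  simp [Real.log_inv]

lemma tail_bound {E : Type*} [MeasurableSpace E] [MetricSpace E]
    (hd : Measurable fun q : E × E => dist q.1 q.2)
    (μ : Measure E) [IsProbabilityMeasure μ] {C : ℝ} (hC : 0 < C)
    (hT : TpIneq 1 dist C μ) (x₀ : E) {ε r₀ : ℝ} (hε : 0 < ε) (hε1 : ε < 1)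
    (hr₀ : 0 ≤ r₀) (hA : μ {x | r₀ < dist x x₀} ≤ ENNReal.ofReal ε)
    (r : ℝ) (hr : 0 ≤ r) :
    (μ {x | r ≤ dist x x₀}).toReal
      ≤ Real.exp (-(max ((1 - ε) * r - r₀) 0) ^ 2 / (2 * C)) := by
  have hg : Measurable fun x : E => dist x x₀ :=
    hd.comp (measurable_id.prodMk measurable_const)
  set B : Set E := {x | r ≤ dist x x₀} with hBdef
  have hB : MeasurableSet B := measurableSet_le measurable_const hg
  by_cases hβ : μ B = 0
  · rw [hβ]; simpa using (Real.exp_pos _).le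
  -- the conditional measure
  set ν : Measure E := (μ B)⁻¹ • μ.restrict B with hν
  have hβtop : μ B ≠ ∞ := measure_ne_top μ B
  have hνuniv : ν Set.univ = 1 := by
    simp [hν, Measure.restrict_apply, ENNReal.inv_mul_cancel hβ hβtop]
  have hνprob : IsProbabilityMeasure ν := ⟨hνuniv⟩
  set s : ℝ := max ((1 - ε) * r - r₀) 0 with hs
  have hs0 : 0 ≤ s := le_max_right _ _
  -- Lipschitz truncated distance function
  set f : E → ℝ := fun x => min (dist x x₀) r with hf
  have hfm : Measurable f := hg.min measurable_const
  have hfnonneg : ∀ x, 0 ≤ f x := fun x => le_min dist_nonneg hr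
  -- lower bound on the Wasserstein distance
  have hW : ENNReal.ofReal s ≤ wassersteinDist 1 dist μ ν := by
    rw [wassersteinDist]
    refine le_iInf₂ fun π hπ => ?_
    have h1 : (∫⁻ z, ENNReal.ofReal (dist z.1 z.2) ^ (1:ℝ) ∂π) ^ (1/(1:ℝ))
        = ∫⁻ z, ENNReal.ofReal (dist z.1 z.2) ∂π := by
      simp [ENNReal.rpow_one]
    rw [h1]
    set I := ∫⁻ z, ENNReal.ofReal (dist z.1 z.2) ∂π with hI
    -- ν-integral lower bound
    have hν1 : ENNReal.ofReal r ≤ ∫⁻ x, ENNReal.ofReal (f x) ∂ν := by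
      have hsub : B ⊆ {x | ENNReal.ofReal r ≤ ENNReal.ofReal (f x)} := by
        intro x hx
        have : f x = r := min_eq_right hx
        simp [this]
      calc ENNReal.ofReal r = ENNReal.ofReal r * ν B := by
            rw [hν]; simp [Measure.restrict_apply hB,
              ENNReal.inv_mul_cancel hβ hβtop]
        _ ≤ ENNReal.ofReal r * ν {x | ENNReal.ofReal r ≤ ENNReal.ofReal (f x)} :=
            mul_le_mul_right (measure_mono hsub) _
        _ ≤ _ := mul_meas_ge_le_lintegral₀ (hfm.ennreal_ofReal).aemeasurable _
    -- μ-integral upper bound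
    have hμ1 : ∫⁻ x, ENNReal.ofReal (f x) ∂μ ≤ ENNReal.ofReal (r₀ + r * ε) := by
      set A : Set E := {x | dist x x₀ ≤ r₀} with hAdef
      have hAm : MeasurableSet A := measurableSet_le hg measurable_const
      have hAc : Aᶜ = {x | r₀ < dist x x₀} := by
        ext x; simp [hAdef, not_le]
      calc ∫⁻ x, ENNReal.ofReal (f x) ∂μ
          = (∫⁻ x in A, ENNReal.ofReal (f x) ∂μ)
            + ∫⁻ x in Aᶜ, ENNReal.ofReal (f x) ∂μ := (lintegral_add_compl _ hAm).symm
        _ ≤ ENNReal.ofReal r₀ * μ A + ENNReal.ofReal r * μ Aᶜ := by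
            gcongr
            · calc ∫⁻ x in A, ENNReal.ofReal (f x) ∂μ
                  ≤ ∫⁻ _ in A, ENNReal.ofReal r₀ ∂μ := by
                    refine setLIntegral_mono measurable_const fun x hx => ?_
                    exact ENNReal.ofReal_le_ofReal ((min_le_left _ _).trans hx)
                _ = ENNReal.ofReal r₀ * μ A := setLIntegral_const _ _
            · calc ∫⁻ x in Aᶜ, ENNReal.ofReal (f x) ∂μ
                  ≤ ∫⁻ _ in Aᶜ, ENNReal.ofReal r ∂μ := by
                    refine setLIntegral_mono measurable_const fun x _ => ?_
                    exact ENNReal.ofReal_le_ofReal (min_le_right _ _)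
                _ = ENNReal.ofReal r * μ Aᶜ := setLIntegral_const _ _
        _ ≤ ENNReal.ofReal r₀ * 1 + ENNReal.ofReal r * ENNReal.ofReal ε := by
            gcongr
            · exact prob_le_one
            · rw [hAc]; exact hA
        _ = ENNReal.ofReal (r₀ + r * ε) := by
            rw [mul_one, ← ENNReal.ofReal_mul hr, ← ENNReal.ofReal_add hr₀ (by positivity)]
    -- pointwise Lipschitz estimate
    have hpt : ∀ z : E × E,
        ENNReal.ofReal (f z.2) ≤ ENNReal.ofReal (dist z.1 z.2) + ENNReal.ofReal (f z.1) := by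
      intro z
      rw [← ENNReal.ofReal_add dist_nonneg (hfnonneg _)]
      refine ENNReal.ofReal_le_ofReal ?_
      have ht : dist z.2 x₀ ≤ dist z.1 z.2 + dist z.1 x₀ := by
        have := dist_triangle z.2 z.1 x₀
        rw [dist_comm z.2 z.1] at this; linarith
      rcases le_total (dist z.1 x₀) r with h | h
      · rw [hf]
        simp only [min_eq_left h]
        exact (min_le_left _ _).trans ht
      · rw [hf]
        simp only [min_eq_right h]
        exact (min_le_right _ _).trans (le_add_of_nonneg_left dist_nonneg)
    -- combine
    have hchain : ENNReal.ofReal r ≤ I + ENNReal.ofReal (r₀ + r * ε) := by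
      calc ENNReal.ofReal r ≤ ∫⁻ x, ENNReal.ofReal (f x) ∂ν := hν1
        _ = ∫⁻ z, ENNReal.ofReal (f z.2) ∂π := by
            rw [← hπ.2, lintegral_map hfm.ennreal_ofReal measurable_snd]
        _ ≤ ∫⁻ z, (ENNReal.ofReal (dist z.1 z.2) + ENNReal.ofReal (f z.1)) ∂π :=
            lintegral_mono hpt
        _ = I + ∫⁻ z, ENNReal.ofReal (f z.1) ∂π :=
            lintegral_add_right _ ((hfm.ennreal_ofReal).comp measurable_fst)
        _ = I + ∫⁻ x, ENNReal.ofReal (f x) ∂μ := by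
            rw [← hπ.1, lintegral_map hfm.ennreal_ofReal measurable_fst]
        _ ≤ I + ENNReal.ofReal (r₀ + r * ε) := add_le_add_right hμ1 _
    have hmax : ∀ a : ℝ, ENNReal.ofReal (max a 0) = ENNReal.ofReal a := by
      intro a
      rcases le_total a 0 with h | h
      · simp [max_eq_right h, ENNReal.ofReal_eq_zero.mpr h]
      · simp [max_eq_left h]
    have hseq : s = max (r - (r₀ + r * ε)) 0 := by
      rw [hs]; congr 1; ring
    have hsor : ENNReal.ofReal s = ENNReal.ofReal r - ENNReal.ofReal (r₀ + r * ε) := by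
      rw [hseq, hmax, ← ENNReal.ofReal_sub _ (by positivity)]
    rw [hsor]
    exact tsub_le_iff_right.mpr hchain
  -- apply T₁
  have hTν := hT ν hνprob
  rw [relEntropy_cond μ hB hβ] at hTν
  set βR : ℝ := (μ B).toReal with hβR
  have hβRpos : 0 < βR := ENNReal.toReal_pos hβ hβtop
  have hβR1 : βR ≤ 1 := by
    rw [hβR]
    exact ENNReal.toReal_le_of_le_ofReal one_pos.le (by simpa using prob_le_one (μ := μ) (s := B))
  have hlognn : 0 ≤ -Real.log βR := by
    have := Real.log_nonpos hβRpos.le hβR1; linarith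
  have hsq : ENNReal.ofReal (s ^ 2) ≤ ENNReal.ofReal (2 * C * (-Real.log βR)) := by
    calc ENNReal.ofReal (s ^ 2) = ENNReal.ofReal s ^ 2 := by
          rw [← ENNReal.ofReal_pow hs0]
      _ ≤ wassersteinDist 1 dist μ ν ^ 2 := by gcongr
      _ ≤ ENNReal.ofReal (2 * C) * ENNReal.ofReal (-Real.log βR) := hTν
      _ = ENNReal.ofReal (2 * C * (-Real.log βR)) := by
          rw [← ENNReal.ofReal_mul (by positivity)]
  have hsq' : s ^ 2 ≤ 2 * C * (-Real.log βR) :=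
    (ENNReal.ofReal_le_ofReal_iff (by positivity)).mp hsq
  have hlog : Real.log βR ≤ -s ^ 2 / (2 * C) := by
    have h2C : (0:ℝ) < 2 * C := by linarith
    have : s ^ 2 / (2 * C) ≤ -Real.log βR := (div_le_iff₀ h2C).mpr (by linarith)
    have h2 : -s^2 / (2*C) = -(s^2/(2*C)) := by ring
    linarith [this, h2 ▸ le_refl (-s^2/(2*C))]
  exact (Real.log_le_iff_le_exp hβRpos).mp hlog

lemma lintegral_exp_sq_lt_top {E : Type*} [MeasurableSpace E] (μ : Measure E)
    [IsProbabilityMeasure μ] {g : E → ℝ} (hg : Measurable g) (hgnn : ∀ x, 0 ≤ g x)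
    {c : ℝ} (hc : 0 < c) {v : ℕ → ℝ} (hv : ∀ n, 0 ≤ v n)
    (htail : ∀ n : ℕ, μ {x | (n : ℝ) ≤ g x} ≤ ENNReal.ofReal (v n))
    (hsum : Summable fun n : ℕ => Real.exp (c * ((n : ℝ) + 1) ^ 2) * v n) :
    ∫⁻ x, ENNReal.ofReal (Real.exp (c * g x ^ 2)) ∂μ < ∞ := by
  set S : ℕ → Set E := fun n => {x | (n : ℝ) ≤ g x ∧ g x < (n : ℝ) + 1} with hS
  have hSm : ∀ n, MeasurableSet (S n) := fun n =>
    (measurableSet_le measurable_const hg).inter (measurableSet_lt hg measurable_const)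
  have hdisj : Pairwise (Function.onFun Disjoint S) := by
    intro m n hmn
    rw [Function.onFun, Set.disjoint_left]
    rintro x ⟨hm1, hm2⟩ ⟨hn1, hn2⟩
    rcases lt_or_gt_of_ne hmn with h | h
    · have : (m : ℝ) + 1 ≤ (n : ℝ) := by exact_mod_cast h
      linarith
    · have : (n : ℝ) + 1 ≤ (m : ℝ) := by exact_mod_cast h
      linarith
  have hunion : (⋃ n, S n) = Set.univ := by
    ext x
    simp only [Set.mem_iUnion, Set.mem_univ, iff_true, hS, Set.mem_setOf_eq]
    exact ⟨⌊g x⌋₊, Nat.floor_le (hgnn x), Nat.lt_floor_add_one _⟩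
  calc ∫⁻ x, ENNReal.ofReal (Real.exp (c * g x ^ 2)) ∂μ
      = ∫⁻ x in ⋃ n, S n, ENNReal.ofReal (Real.exp (c * g x ^ 2)) ∂μ := by
        rw [hunion, Measure.restrict_univ]
    _ = ∑' n, ∫⁻ x in S n, ENNReal.ofReal (Real.exp (c * g x ^ 2)) ∂μ :=
        lintegral_iUnion hSm hdisj _
    _ ≤ ∑' n : ℕ, ENNReal.ofReal (Real.exp (c * ((n : ℝ) + 1) ^ 2) * v n) := by
        refine ENNReal.tsum_le_tsum fun n => ?_
        calc ∫⁻ x in S n, ENNReal.ofReal (Real.exp (c * g x ^ 2)) ∂μ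
            ≤ ∫⁻ _ in S n, ENNReal.ofReal (Real.exp (c * ((n : ℝ) + 1) ^ 2)) ∂μ := by
              refine setLIntegral_mono measurable_const fun x hx => ?_
              refine ENNReal.ofReal_le_ofReal (Real.exp_le_exp.mpr ?_)
              have h2 := hx.2; have h0 := hgnn x
              exact mul_le_mul_of_nonneg_left (pow_le_pow_left₀ h0 h2.le 2) hc.le
          _ = ENNReal.ofReal (Real.exp (c * ((n : ℝ) + 1) ^ 2)) * μ (S n) :=
              setLIntegral_const _ _
          _ ≤ ENNReal.ofReal (Real.exp (c * ((n : ℝ) + 1) ^ 2)) * ENNReal.ofReal (v n) := by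
              gcongr
              exact le_trans (measure_mono fun x hx => hx.1) (htail n)
          _ = ENNReal.ofReal (Real.exp (c * ((n : ℝ) + 1) ^ 2) * v n) :=
              (ENNReal.ofReal_mul (Real.exp_nonneg _)).symm
    _ = ENNReal.ofReal (∑' n : ℕ, Real.exp (c * ((n : ℝ) + 1) ^ 2) * v n) :=
        (ENNReal.ofReal_tsum_of_nonneg (fun n => mul_nonneg (Real.exp_nonneg _) (hv n)) hsum).symm
    _ < ∞ := ENNReal.ofReal_lt_top

set_option maxHeartbeats 1000000 in
lemma summable_aux {c C k r₀ : ℝ} (hc : 0 < c) (hC : 0 < C) (hk : 0 < k)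
    (hr₀ : 0 ≤ r₀) (hck : c < k ^ 2 / (2 * C)) :
    Summable fun n : ℕ =>
      Real.exp (c * ((n : ℝ) + 1) ^ 2) *
        Real.exp (-(max (k * (n : ℝ) - r₀) 0) ^ 2 / (2 * C)) := by
  have hdpos : (0:ℝ) < k ^ 2 / (2 * C) - c := by linarith
  set D : ℝ := max (c - r₀ ^ 2 / (2 * C)) 0 with hD
  have hDnn : 0 ≤ D := le_max_right _ _
  have hDge : c - r₀ ^ 2 / (2 * C) ≤ D := le_max_left _ _
  have hev : ∀ᶠ n : ℕ in atTop,
      c * ((n : ℝ) + 1) ^ 2 - (max (k * (n : ℝ) - r₀) 0) ^ 2 / (2 * C) ≤ -(n : ℝ) := by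
    obtain ⟨N, hN⟩ := exists_nat_ge (max (r₀ / k)
      ((2 * c + k * r₀ / C + 1 + D + 1) / (k ^ 2 / (2 * C) - c)) + 1)
    rw [eventually_atTop]
    refine ⟨N, fun n hn => ?_⟩
    set m : ℝ := (n : ℝ) with hm
    have hm0 : (0:ℝ) ≤ m := Nat.cast_nonneg n
    have hnR : max (r₀ / k) ((2 * c + k * r₀ / C + 1 + D + 1) / (k ^ 2 / (2 * C) - c)) + 1 ≤ m :=
      hN.trans (by rw [hm]; exact_mod_cast hn)
    have hm1 : (1 : ℝ) ≤ m := by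
      have h0 : 0 ≤ r₀ / k := div_nonneg hr₀ hk.le
      have := le_max_left (r₀ / k) ((2 * c + k * r₀ / C + 1 + D + 1) / (k ^ 2 / (2 * C) - c))
      linarith
    have hnr : r₀ / k ≤ m := by
      linarith [le_max_left (r₀ / k) ((2 * c + k * r₀ / C + 1 + D + 1) / (k ^ 2 / (2 * C) - c))]
    have hknr : r₀ ≤ k * m := by rw [div_le_iff₀ hk] at hnr; linarith
    have hmax : max (k * m - r₀) 0 = k * m - r₀ := max_eq_left (by linarith)
    have hnd : (2 * c + k * r₀ / C + 1 + D + 1) / (k ^ 2 / (2 * C) - c) ≤ m := by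
      linarith [le_max_right (r₀ / k) ((2 * c + k * r₀ / C + 1 + D + 1) / (k ^ 2 / (2 * C) - c))]
    have hnd' : 2 * c + k * r₀ / C + 1 + D + 1 ≤ (k ^ 2 / (2 * C) - c) * m := by
      rw [div_le_iff₀ hdpos] at hnd; linarith
    have hprod : (2 * c + k * r₀ / C + 1 + D + 1) * m ≤ ((k ^ 2 / (2 * C) - c) * m) * m :=
      mul_le_mul_of_nonneg_right hnd' hm0
    have hDm : D ≤ D * m := le_mul_of_one_le_right hDnn hm1
    rw [hmax]
    have hCne : (C:ℝ) ≠ 0 := ne_of_gt hC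
    have hexpand : (k * m - r₀) ^ 2 / (2 * C)
        = (k ^ 2 / (2 * C)) * m ^ 2 - (k * r₀ / C) * m + r₀ ^ 2 / (2 * C) := by
      field_simp; ring
    rw [hexpand]
    nlinarith [hprod, hDge, hDm, hm0]
  obtain ⟨N, hN⟩ := eventually_atTop.mp hev
  refine (summable_nat_add_iff N).mp ?_
  refine Summable.of_nonneg_of_le
    (fun n => mul_nonneg (Real.exp_nonneg _) (Real.exp_nonneg _)) (fun n => ?_)
    (summable_geometric_of_lt_one (Real.exp_nonneg (-1)) (by
      rw [Real.exp_lt_one_iff]; norm_num))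
  have h1 : Real.exp (c * (((n + N : ℕ) : ℝ) + 1) ^ 2) *
      Real.exp (-(max (k * ((n + N : ℕ) : ℝ) - r₀) 0) ^ 2 / (2 * C))
      = Real.exp (c * (((n + N : ℕ) : ℝ) + 1) ^ 2
        - (max (k * ((n + N : ℕ) : ℝ) - r₀) 0) ^ 2 / (2 * C)) := by
    rw [← Real.exp_add]; ring_nf
  rw [h1]
  calc Real.exp (c * (((n + N : ℕ) : ℝ) + 1) ^ 2
        - (max (k * ((n + N : ℕ) : ℝ) - r₀) 0) ^ 2 / (2 * C))
      ≤ Real.exp (-((n + N : ℕ) : ℝ)) := Real.exp_le_exp.mpr (hN (n + N) (Nat.le_add_left _ _))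
    _ ≤ Real.exp (-(n : ℝ)) := Real.exp_le_exp.mpr
        (by push_cast; linarith [Nat.cast_nonneg (α := ℝ) N])
    _ = Real.exp (-1) ^ n := by
        rw [← Real.exp_nat_mul]; ring_nf

/-- If `μ ∈ T₁(C)` then `μ` has a square-exponential (Gaussian) moment: (1.5) and the
single-variable version. -/
theorem T1_implies_gaussian_tail
    {E : Type*} [MeasurableSpace E] [MetricSpace E]
    (hd : Measurable fun q : E × E => dist q.1 q.2)
    (μ : Measure E) [IsProbabilityMeasure μ] (C : ℝ) (hC : 0 < C)
    (hT : TpIneq 1 dist C μ) :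
    (∀ δ : ℝ, 0 < δ → δ < 1 / (4 * C) →
      ∫⁻ x, ∫⁻ y, ENNReal.ofReal (Real.exp (δ * dist x y ^ 2)) ∂μ ∂μ < ∞) ∧
    (∀ c : ℝ, 0 < c → c < 1 / (2 * C) → ∀ x₀ : E,
      ∫⁻ x, ENNReal.ofReal (Real.exp (c * dist x x₀ ^ 2)) ∂μ < ∞) := by
  have h2C : (0:ℝ) < 2 * C := by linarith
  -- Part 2 first
  have part2 : ∀ c : ℝ, 0 < c → c < 1 / (2 * C) → ∀ x₀ : E,
      ∫⁻ x, ENNReal.ofReal (Real.exp (c * dist x x₀ ^ 2)) ∂μ < ∞ := by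
    intro c hc hcC x₀
    have hg : Measurable fun x : E => dist x x₀ :=
      hd.comp (measurable_id.prodMk measurable_const)
    have h2Cc : 2 * C * c < 1 := by
      rw [lt_div_iff₀ h2C] at hcC; linarith
    set θ : ℝ := Real.sqrt (2 * C * c) with hθ
    have hθ0 : 0 ≤ θ := Real.sqrt_nonneg _
    have hθ2 : θ ^ 2 = 2 * C * c := Real.sq_sqrt (by positivity)
    have hθ1 : θ < 1 := by
      nlinarith [hθ2, hθ0]
    set ε : ℝ := (1 - θ) / 2 with hε'
    have hε : 0 < ε := by rw [hε']; linarith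
    have hε1 : ε < 1 := by rw [hε']; linarith
    have hk : (0:ℝ) < 1 - ε := by linarith
    have hck : c < (1 - ε) ^ 2 / (2 * C) := by
      rw [lt_div_iff₀ h2C]
      have hθk : θ < 1 - ε := by rw [hε']; linarith
      nlinarith [hθ2, hθ0, hθk]
    -- choose r₀
    obtain ⟨n₀, hn₀⟩ : ∃ n₀ : ℕ, μ {x | (n₀ : ℝ) < dist x x₀} ≤ ENNReal.ofReal ε := by
      set s : ℕ → Set E := fun n => {x | (n : ℝ) < dist x x₀} with hs
      have hsm : ∀ n, NullMeasurableSet (s n) μ :=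
        fun n => (measurableSet_lt measurable_const hg).nullMeasurableSet
      have hanti : Antitone s := by
        intro m n hmn x hx
        simp only [hs, Set.mem_setOf_eq] at hx ⊢
        exact lt_of_le_of_lt (by exact_mod_cast hmn) hx
      have hfin : ∃ n, μ (s n) ≠ ∞ := ⟨0, measure_ne_top _ _⟩
      have hiInter : ⋂ n, s n = ∅ := by
        ext x
        simp only [Set.mem_iInter, Set.mem_empty_iff_false, iff_false, not_forall, hs,
          Set.mem_setOf_eq, not_lt]
        obtain ⟨n, hn⟩ := exists_nat_ge (dist x x₀)
        exact ⟨n, hn⟩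
      have htend := tendsto_measure_iInter_atTop hsm hanti hfin
      rw [hiInter, measure_empty] at htend
      have := htend.eventually_le_const (ENNReal.ofReal_pos.mpr hε)
      exact (this.exists)
    set r₀ : ℝ := (n₀ : ℝ) with hr₀'
    have hr₀ : 0 ≤ r₀ := Nat.cast_nonneg _
    have htail : ∀ n : ℕ, μ {x | (n : ℝ) ≤ dist x x₀} ≤
        ENNReal.ofReal (Real.exp (-(max ((1 - ε) * (n : ℝ) - r₀) 0) ^ 2 / (2 * C))) := by
      intro n
      rw [← ENNReal.ofReal_toReal (measure_ne_top μ _)]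
      exact ENNReal.ofReal_le_ofReal
        (tail_bound hd μ hC hT x₀ hε hε1 hr₀ hn₀ (n : ℝ) (Nat.cast_nonneg n))
    exact lintegral_exp_sq_lt_top μ hg (fun x => dist_nonneg) hc
      (fun n => (Real.exp_nonneg _)) htail
      (summable_aux hc hC hk hr₀ hck)
  refine ⟨?_, part2⟩
  intro δ hδ hδC
  haveI : Nonempty E := by
    by_contra h
    rw [not_nonempty_iff] at h
    have h1 : μ Set.univ = 1 := measure_univ
    rw [Set.univ_eq_empty_iff.mpr h, measure_empty] at h1
    exact zero_ne_one h1
  obtain ⟨x₀⟩ := (inferInstance : Nonempty E)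
  have hg : Measurable fun x : E => dist x x₀ :=
    hd.comp (measurable_id.prodMk measurable_const)
  have h2δ : 2 * δ < 1 / (2 * C) := by
    rw [lt_div_iff₀ (by positivity : (0:ℝ) < 4 * C)] at hδC
    rw [lt_div_iff₀ h2C]; linarith
  have hK := part2 (2 * δ) (by linarith) h2δ x₀
  set K : ℝ≥0∞ := ∫⁻ x, ENNReal.ofReal (Real.exp (2 * δ * dist x x₀ ^ 2)) ∂μ with hKdef
  have hmeas : Measurable fun y : E => ENNReal.ofReal (Real.exp (2 * δ * dist y x₀ ^ 2)) := by
    exact ((hg.pow_const 2).const_mul _).exp.ennreal_ofReal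
  have hinner : ∀ x : E, ∫⁻ y, ENNReal.ofReal (Real.exp (δ * dist x y ^ 2)) ∂μ
      ≤ ENNReal.ofReal (Real.exp (2 * δ * dist x x₀ ^ 2)) * K := by
    intro x
    calc ∫⁻ y, ENNReal.ofReal (Real.exp (δ * dist x y ^ 2)) ∂μ
        ≤ ∫⁻ y, ENNReal.ofReal (Real.exp (2 * δ * dist x x₀ ^ 2)) *
            ENNReal.ofReal (Real.exp (2 * δ * dist y x₀ ^ 2)) ∂μ := by
          refine lintegral_mono fun y => ?_
          rw [← ENNReal.ofReal_mul (Real.exp_nonneg _), ← Real.exp_add]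
          refine ENNReal.ofReal_le_ofReal (Real.exp_le_exp.mpr ?_)
          have htri : dist x y ≤ dist x x₀ + dist y x₀ := by
            rw [dist_comm y x₀]
            exact dist_triangle x x₀ y
          nlinarith [mul_le_mul_of_nonneg_left
              (mul_self_le_mul_self (dist_nonneg (x := x) (y := y)) htri) hδ.le,
            mul_le_mul_of_nonneg_left (sq_nonneg (dist x x₀ - dist y x₀)) hδ.le]
      _ = ENNReal.ofReal (Real.exp (2 * δ * dist x x₀ ^ 2)) * K := by
          rw [lintegral_const_mul _ hmeas]
  calc ∫⁻ x, ∫⁻ y, ENNReal.ofReal (Real.exp (δ * dist x y ^ 2)) ∂μ ∂μ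
      ≤ ∫⁻ x, ENNReal.ofReal (Real.exp (2 * δ * dist x x₀ ^ 2)) * K ∂μ :=
        lintegral_mono hinner
    _ = K * K := by rw [lintegral_mul_const _ hmeas]
    _ < ∞ := ENNReal.mul_lt_top hK hK

end
end

section
/- (Identity (2.1): contraction of relative entropy under a measurable map, with attained infimum.) Let E, F be Polish spaces, Ψ : E → F measurable, μ a probability measure on E, and μ̃ = μ ∘ Ψ^{-1}. Then for every probability measure ν̃ on F with H(ν̃|μ̃) < +∞, one has H(ν̃|μ̃) = inf{ H(ν|μ) : ν is a probability measure on E with ν ∘ Ψ^{-1} = ν̃ }, and the infimum is attained by ν₀(dx) = (dν̃/dμ̃)(Ψ(x)) μ(dx). -/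
open MeasureTheory ProbabilityTheory ENNReal

noncomputable section

open Classical in
lemma relEntropy_eq_llr {E : Type*} [MeasurableSpace E] (ν μ : Measure E) :
    relEntropy ν μ =
      if ν ≪ μ ∧ Integrable (llr ν μ) ν then ENNReal.ofReal (∫ x, llr ν μ x ∂ν) else ∞ := rfl

lemma integral_llr_nonneg' {α : Type*} [MeasurableSpace α] (ν ν₀ : Measure α)
    [IsProbabilityMeasure ν] [IsProbabilityMeasure ν₀]
    (hac : ν ≪ ν₀) (hint : Integrable (llr ν ν₀) ν) :
    0 ≤ ∫ x, llr ν ν₀ x ∂ν := by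
  have h1 : ∀ x, -llr ν ν₀ x ≤ Real.exp (-llr ν ν₀ x) - 1 := fun x => by
    linarith [Real.add_one_le_exp (-llr ν ν₀ x)]
  have hcongr := exp_neg_llr hac
  have hint2 : Integrable (fun x => Real.exp (-llr ν ν₀ x)) ν :=
    (integrable_congr hcongr).mpr Measure.integrable_toReal_rnDeriv
  have h2 : ∫ x, Real.exp (-llr ν ν₀ x) ∂ν = ∫ x, (ν₀.rnDeriv ν x).toReal ∂ν :=
    integral_congr_ae hcongr
  have h3 : ∫ x, (ν₀.rnDeriv ν x).toReal ∂ν ≤ 1 := by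
    rw [Measure.integral_toReal_rnDeriv']
    have : (0:ℝ) ≤ ((ν₀.singularPart ν) Set.univ).toReal := ENNReal.toReal_nonneg
    simp only [measureReal_def, measure_univ, ENNReal.toReal_one]
    linarith
  have h4 : ∫ x, -llr ν ν₀ x ∂ν ≤ ∫ x, (Real.exp (-llr ν ν₀ x) - 1) ∂ν :=
    integral_mono hint.neg (hint2.sub (integrable_const 1)) h1
  rw [integral_neg, integral_sub hint2 (integrable_const 1)] at h4
  simp only [integral_const, probReal_univ, measure_univ, ENNReal.toReal_one, smul_eq_mul, one_mul] at h4
  linarith [h2 ▸ h3]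

/-- **Identity (2.1): contraction of relative entropy under a measurable map, with attained
infimum.** -/
theorem relEntropy_map_eq_iInf
    {E F : Type*} [MeasurableSpace E] [TopologicalSpace E] [PolishSpace E] [BorelSpace E]
    [MeasurableSpace F] [TopologicalSpace F] [PolishSpace F] [BorelSpace F]
    (Ψ : E → F) (hΨ : Measurable Ψ)
    (μ : Measure E) [IsProbabilityMeasure μ]
    (ν' : Measure F) [IsProbabilityMeasure ν']
    (hfin : relEntropy ν' (μ.map Ψ) < ∞) :
    relEntropy ν' (μ.map Ψ) =
      (⨅ (ν : Measure E) (_ : IsProbabilityMeasure ν) (_ : ν.map Ψ = ν'),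
        relEntropy ν μ) ∧
    (μ.withDensity fun x => ν'.rnDeriv (μ.map Ψ) (Ψ x)).map Ψ = ν' ∧
    relEntropy (μ.withDensity fun x => ν'.rnDeriv (μ.map Ψ) (Ψ x)) μ =
      relEntropy ν' (μ.map Ψ) := by
  haveI : IsProbabilityMeasure (μ.map Ψ) := Measure.isProbabilityMeasure_map hΨ.aemeasurable
  set μt := μ.map Ψ with hμt
  set f : F → ℝ≥0∞ := ν'.rnDeriv μt with hf
  have hfmeas : Measurable f := Measure.measurable_rnDeriv _ _
  set g : F → ℝ := fun y => Real.log ((f y).toReal) with hg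
  have hgmeas : Measurable g := hfmeas.ennreal_toReal.log
  have hglr : llr ν' μt = g := rfl
  -- extract hypotheses from finiteness
  have hcond : ν' ≪ μt ∧ Integrable (llr ν' μt) ν' := by
    by_contra h
    rw [relEntropy_eq_llr, if_neg h] at hfin
    exact absurd hfin (lt_irrefl _)
  obtain ⟨hac', hint'⟩ := hcond
  set ν₀ : Measure E := μ.withDensity fun x => f (Ψ x) with hν₀
  have hfΨmeas : Measurable fun x => f (Ψ x) := hfmeas.comp hΨ
  -- ν₀.map Ψ = ν'
  have hmap : ν₀.map Ψ = ν' := by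
    ext s hs
    rw [Measure.map_apply hΨ hs, hν₀, withDensity_apply _ (hΨ hs),
      ← setLIntegral_map hs hfmeas hΨ, ← hμt, Measure.setLIntegral_rnDeriv hac' s]
  haveI hprob₀ : IsProbabilityMeasure ν₀ := by
    constructor
    have := congrArg (fun m : Measure F => m Set.univ) hmap
    simpa [Measure.map_apply hΨ MeasurableSet.univ] using this
  have hac₀ : ν₀ ≪ μ := withDensity_absolutelyContinuous μ _
  have hrn₀ : ν₀.rnDeriv μ =ᵐ[μ] fun x => f (Ψ x) := Measure.rnDeriv_withDensity μ hfΨmeas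
  have hllr₀ : llr ν₀ μ =ᵐ[ν₀] fun x => g (Ψ x) := by
    filter_upwards [hac₀.ae_le hrn₀] with x hx
    rw [llr, hx]
  -- transfer of integral/integrability along Ψ for ν₀
  have hint₀ : Integrable (llr ν₀ μ) ν₀ := by
    rw [integrable_congr hllr₀]
    have : Integrable g (ν₀.map Ψ) := by rw [hmap]; exact hglr ▸ hint'
    exact (integrable_map_measure hgmeas.aestronglyMeasurable hΨ.aemeasurable).mp this
  have hintegral₀ : ∫ x, llr ν₀ μ x ∂ν₀ = ∫ y, llr ν' μt y ∂ν' := by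
    rw [integral_congr_ae hllr₀, hglr, ← hmap,
      integral_map hΨ.aemeasurable hgmeas.aestronglyMeasurable]
  -- part 3
  have hpart3 : relEntropy ν₀ μ = relEntropy ν' μt := by
    rw [relEntropy_eq_llr, relEntropy_eq_llr, if_pos ⟨hac₀, hint₀⟩, if_pos ⟨hac', hint'⟩,
      hintegral₀]
  -- data processing inequality
  have hDPI : ∀ ν : Measure E, IsProbabilityMeasure ν → ν.map Ψ = ν' →
      relEntropy ν' μt ≤ relEntropy ν μ := by
    intro ν hνprob hmν
    by_cases hc : ν ≪ μ ∧ Integrable (llr ν μ) ν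
    swap
    · rw [relEntropy_eq_llr ν μ, if_neg hc]; exact le_top
    obtain ⟨hacν, hintν⟩ := hc
    -- ν ≪ ν₀
    have hacν₀ : ν ≪ ν₀ := by
      refine Measure.AbsolutelyContinuous.mk fun s hs hs0 => ?_
      set Z : Set F := {y | f y = 0} with hZ
      have hZmeas : MeasurableSet Z := hfmeas (measurableSet_singleton 0)
      have hνZ : ν (Ψ ⁻¹' Z) = 0 := by
        have h1 : ν (Ψ ⁻¹' Z) = ν' Z := by rw [← hmν, Measure.map_apply hΨ hZmeas]
        have h2 : ν' Z = 0 := by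
          rw [← Measure.setLIntegral_rnDeriv hac' Z]
          rw [setLIntegral_congr_fun hZmeas (fun y hy => hy), lintegral_zero]
        rw [h1, h2]
      have hμrest : ∀ᵐ x ∂μ, x ∈ s → f (Ψ x) = 0 := by
        rw [hν₀, withDensity_apply _ hs] at hs0
        exact (setLIntegral_eq_zero_iff hs hfΨmeas).mp hs0
      have hμcompl : μ ((Ψ ⁻¹' Z)ᶜ ∩ s) = 0 := by
        rw [ae_iff] at hμrest
        refine measure_mono_null ?_ hμrest
        intro x hx
        simp only [Set.mem_setOf_eq, not_forall]
        exact ⟨hx.2, hx.1⟩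
      have hsub : s ⊆ Ψ ⁻¹' Z ∪ ((Ψ ⁻¹' Z)ᶜ ∩ s) := by
        intro x hx
        by_cases hxz : x ∈ Ψ ⁻¹' Z
        · exact Or.inl hxz
        · exact Or.inr ⟨hxz, hx⟩
      refine le_antisymm ?_ zero_le
      calc ν s ≤ ν (Ψ ⁻¹' Z ∪ ((Ψ ⁻¹' Z)ᶜ ∩ s)) := measure_mono hsub
        _ ≤ ν (Ψ ⁻¹' Z) + ν ((Ψ ⁻¹' Z)ᶜ ∩ s) := measure_union_le _ _
        _ = 0 := by rw [hνZ, hacν hμcompl, add_zero]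
    -- chain rule
    have hchain : llr ν μ =ᵐ[ν] fun x => llr ν ν₀ x + g (Ψ x) := by
      have hmul : ν.rnDeriv ν₀ * ν₀.rnDeriv μ =ᵐ[ν] ν.rnDeriv μ :=
        hacν.ae_le (Measure.rnDeriv_mul_rnDeriv hacν₀)
      filter_upwards [hmul, Measure.rnDeriv_pos hacν₀,
        hacν₀.ae_le (Measure.rnDeriv_lt_top ν ν₀), hacν₀.ae_le (Measure.rnDeriv_pos hac₀),
        hacν.ae_le (Measure.rnDeriv_lt_top ν₀ μ), hacν.ae_le hrn₀] with x h1 h2 h3 h4 h5 h6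
      have ha : ((ν.rnDeriv ν₀ x).toReal : ℝ) ≠ 0 :=
        (ENNReal.toReal_pos h2.ne' h3.ne).ne'
      have hb : ((ν₀.rnDeriv μ x).toReal : ℝ) ≠ 0 :=
        (ENNReal.toReal_pos h4.ne' h5.ne).ne'
      rw [llr, ← h1, Pi.mul_apply, ENNReal.toReal_mul, Real.log_mul ha hb]
      congr 1
      rw [hg]
      simp only
      rw [h6]
    have hgΨint : Integrable (fun x => g (Ψ x)) ν := by
      have : Integrable g (ν.map Ψ) := by rw [hmν]; exact hglr ▸ hint'
      exact (integrable_map_measure hgmeas.aestronglyMeasurable hΨ.aemeasurable).mp this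
    have hintνν₀ : Integrable (llr ν ν₀) ν := by
      have : Integrable (fun x => llr ν μ x - g (Ψ x)) ν := hintν.sub hgΨint
      refine this.congr ?_
      filter_upwards [hchain] with x hx
      rw [hx]; ring
    have hsplit : ∫ x, llr ν μ x ∂ν = ∫ x, llr ν ν₀ x ∂ν + ∫ x, g (Ψ x) ∂ν := by
      rw [integral_congr_ae hchain, integral_add hintνν₀ hgΨint]
    have hgint : ∫ x, g (Ψ x) ∂ν = ∫ y, llr ν' μt y ∂ν' := by
      rw [hglr, ← hmν, integral_map hΨ.aemeasurable hgmeas.aestronglyMeasurable]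
    have hnn : 0 ≤ ∫ x, llr ν ν₀ x ∂ν := integral_llr_nonneg' ν ν₀ hacν₀ hintνν₀
    have hle : ∫ y, llr ν' μt y ∂ν' ≤ ∫ x, llr ν μ x ∂ν := by
      rw [hsplit, ← hgint]; linarith
    rw [relEntropy_eq_llr ν' μt, relEntropy_eq_llr ν μ, if_pos ⟨hac', hint'⟩,
      if_pos ⟨hacν, hintν⟩]
    exact ENNReal.ofReal_le_ofReal hle
  refine ⟨?_, hmap, hpart3⟩
  refine le_antisymm (le_iInf fun ν => le_iInf fun hν => le_iInf fun hmν => hDPI ν hν hmν) ?_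
  calc (⨅ (ν : Measure E) (_ : IsProbabilityMeasure ν) (_ : ν.map Ψ = ν'), relEntropy ν μ)
      ≤ relEntropy ν₀ μ :=
        iInf_le_of_le ν₀ (iInf_le_of_le hprob₀ (iInf_le_of_le hmap le_rfl))
    _ = relEntropy ν' μt := hpart3


end
end

section
/- (Key estimate in the proof of Theorem 2.3.) Let ξ and ξ' be independent E-valued random variables with common law μ on the metric space (E,d). Suppose E[d(ξ,ξ')^{2k}] < +∞ for every k ≥ 1 and that C := 2·sup_{k≥1} ( k!·E[d(ξ,ξ')^{2k}] / (2k)! )^{1/k} < +∞. Then for every function F : E → ℝ with ‖F‖_Lip ≤ 1 and E[F(ξ)] = 0, and every λ ∈ ℝ, one has E[exp(λ F(ξ))] ≤ exp(Cλ²/2). -/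
open MeasureTheory ProbabilityTheory ENNReal

noncomputable section

lemma aux_summable_even (x : ℝ) : Summable (fun k : ℕ => x ^ (2 * k) / (2 * k).factorial) :=
  (Real.summable_pow_div_factorial x).comp_injective (fun a b h => by simpa using h)

lemma aux_exp_tsum (y : ℝ) : Real.exp y = ∑' n : ℕ, y ^ n / n.factorial := by
  rw [Real.exp_eq_exp_ℝ, NormedSpace.exp_eq_tsum_div]

lemma aux_cosh_series (x : ℝ) :
    Real.exp x + Real.exp (-x) = 2 * ∑' k : ℕ, x ^ (2 * k) / (2 * k).factorial := by
  have hs : Summable (fun n : ℕ => x ^ n / n.factorial) := Real.summable_pow_div_factorial x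
  have hs' : Summable (fun n : ℕ => (-x) ^ n / n.factorial) := Real.summable_pow_div_factorial _
  rw [aux_exp_tsum, aux_exp_tsum, ← Summable.tsum_add hs hs']
  have hinj : Function.Injective (fun k : ℕ => 2 * k) := fun a b h => by simpa using h
  have hsupp : Function.support (fun n : ℕ => x ^ n / n.factorial + (-x) ^ n / n.factorial)
      ⊆ Set.range (fun k : ℕ => 2 * k) := by
    intro n hn
    rcases Nat.even_or_odd n with he | ho
    · exact ⟨n / 2, by simpa using (Nat.two_mul_div_two_of_even he).symm ▸ rfl⟩
    · exfalso
      apply hn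
      simp only [ho.neg_pow]
      ring
  rw [← hinj.tsum_eq hsupp, ← tsum_mul_left]
  congr 1
  ext k
  have : (-x) ^ (2 * k) = x ^ (2 * k) := (even_two_mul k).neg_pow x
  simp only [this]
  ring

lemma aux_cosh_mono {a b : ℝ} (h : |a| ≤ b) :
    Real.exp a + Real.exp (-a) ≤ Real.exp b + Real.exp (-b) := by
  have hb : 0 ≤ b := (abs_nonneg a).trans h
  have := Real.cosh_le_cosh.2 (h.trans_eq (abs_of_nonneg hb).symm)
  rw [Real.cosh_eq, Real.cosh_eq] at this
  linarith

set_option maxHeartbeats 1000000 in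
set_option maxHeartbeats 1000000 in
/-- **Key estimate in the proof of Theorem 2.3**: sub-Gaussian Laplace transform bound from
even moments of the distance between two independent copies. -/
theorem exp_moment_bound_of_even_moments
    {Ω E : Type*} [MeasurableSpace Ω] [MeasurableSpace E] [MetricSpace E]
    (P : Measure Ω) [IsProbabilityMeasure P]
    (ξ ξ' : Ω → E) (hξ : Measurable ξ) (hξ' : Measurable ξ')
    (hid : P.map ξ = P.map ξ') (hind : IndepFun ξ ξ' P)
    (hmom : ∀ k : ℕ, 1 ≤ k → Integrable (fun ω => dist (ξ ω) (ξ' ω) ^ (2 * k)) P)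
    (hbdd : BddAbove (Set.range fun k : ℕ+ =>
      ((Nat.factorial (k : ℕ) : ℝ) * (∫ ω, dist (ξ ω) (ξ' ω) ^ (2 * (k : ℕ)) ∂P) /
          (Nat.factorial (2 * (k : ℕ)))) ^ (1 / ((k : ℕ) : ℝ))))
    (C : ℝ)
    (hC : C = 2 * ⨆ k : ℕ+,
      ((Nat.factorial (k : ℕ) : ℝ) * (∫ ω, dist (ξ ω) (ξ' ω) ^ (2 * (k : ℕ)) ∂P) /
          (Nat.factorial (2 * (k : ℕ)))) ^ (1 / ((k : ℕ) : ℝ)))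
    (F : E → ℝ) (hF : Measurable F) (hlip : ∀ x y, |F x - F y| ≤ dist x y)
    (hmean : ∫ ω, F (ξ ω) ∂P = 0) (l : ℝ) :
    ∫ ω, Real.exp (l * F (ξ ω)) ∂P ≤ Real.exp (C * l ^ 2 / 2) := by
  set D : Ω → ℝ := fun ω => dist (ξ ω) (ξ' ω) with hD_def
  set S : ℝ := C / 2 with hS_def
  have hD_nonneg : ∀ ω, 0 ≤ D ω := fun ω => dist_nonneg
  have hm_nonneg : ∀ k : ℕ, 0 ≤ ∫ ω, D ω ^ (2 * k) ∂P := fun k =>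
    integral_nonneg fun ω => pow_nonneg (hD_nonneg ω) _
  -- the supremum bound
  have hsup_le : ∀ k : ℕ+, (((k : ℕ).factorial : ℝ) * (∫ ω, D ω ^ (2 * (k : ℕ)) ∂P) /
      ((2 * (k : ℕ)).factorial)) ^ (1 / ((k : ℕ) : ℝ)) ≤ S := by
    intro k
    have h1 := le_ciSup hbdd k
    rw [hS_def, hC]
    linarith
  have hS_nonneg : 0 ≤ S :=
    le_trans (Real.rpow_nonneg (by positivity) _) (hsup_le 1)
  have hSk : ∀ k : ℕ, 1 ≤ k →
      (∫ ω, D ω ^ (2 * k) ∂P) / ((2 * k).factorial : ℝ) ≤ S ^ k / (k.factorial : ℝ) := by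
    intro k hk
    set a : ℝ := ((k.factorial : ℝ)) * (∫ ω, D ω ^ (2 * k) ∂P) / (((2 * k).factorial : ℝ))
      with ha_def
    have ha : 0 ≤ a := by
      apply div_nonneg (mul_nonneg (by positivity) (hm_nonneg k)) (by positivity)
    have h1 : a ^ (1 / ((k : ℕ) : ℝ)) ≤ S := hsup_le ⟨k, hk⟩
    have hk' : ((k : ℕ) : ℝ) ≠ 0 := Nat.cast_ne_zero.2 (by omega)
    have h2 : a = (a ^ (1 / ((k : ℕ) : ℝ))) ^ k := by
      rw [← Real.rpow_natCast (a ^ (1 / ((k : ℕ) : ℝ))) k, ← Real.rpow_mul ha,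
        one_div_mul_cancel hk', Real.rpow_one]
    have h3 : a ≤ S ^ k := h2 ▸ pow_le_pow_left₀ (Real.rpow_nonneg ha _) h1 k
    have hkf : (0:ℝ) < (k.factorial : ℝ) := by positivity
    rw [div_le_div_iff₀ (by positivity) hkf]
    rw [ha_def] at h3
    have h4 := mul_le_mul_of_nonneg_right h3 (le_of_lt hkf)
    have h2kf : (0:ℝ) < (((2*k).factorial : ℕ) : ℝ) := by positivity
    calc (∫ ω, D ω ^ (2 * k) ∂P) * (k.factorial : ℝ)
        = ((k.factorial : ℝ) * (∫ ω, D ω ^ (2 * k) ∂P) / (((2 * k).factorial : ℝ)))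
            * (((2*k).factorial : ℝ)) := by field_simp
      _ ≤ S ^ k * (((2*k).factorial : ℝ)) := by
          apply mul_le_mul_of_nonneg_right h3 (le_of_lt h2kf)
  -- measurability basics
  have hD2 : Integrable (fun ω => D ω ^ 2) P := by
    have := hmom 1 le_rfl
    simpa using this
  have hDm : AEMeasurable D P := by
    have h1 : AEMeasurable (fun ω => D ω ^ 2) P := hD2.aemeasurable
    have h2 : AEMeasurable (fun ω => Real.sqrt (D ω ^ 2)) P :=
      Real.continuous_sqrt.measurable.comp_aemeasurable h1
    exact h2.congr (Filter.Eventually.of_forall fun ω => Real.sqrt_sq (hD_nonneg ω))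
  have hFξ : Measurable fun ω => F (ξ ω) := hF.comp hξ
  have hFξ' : Measurable fun ω => F (ξ' ω) := hF.comp hξ'
  have hexp1 : Measurable fun x : E => ENNReal.ofReal (Real.exp (l * F x)) :=
    ENNReal.measurable_ofReal.comp (Real.measurable_exp.comp (hF.const_mul l))
  have hexp2 : Measurable fun x : E => ENNReal.ofReal (Real.exp (-(l * F x))) :=
    ENNReal.measurable_ofReal.comp (Real.measurable_exp.comp (hF.const_mul l).neg)
  set A : ℝ≥0∞ := ∫⁻ ω, ENNReal.ofReal (Real.exp (l * F (ξ ω))) ∂P with hA_def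
  set B : ℝ≥0∞ := ∫⁻ ω, ENNReal.ofReal (Real.exp (-(l * F (ξ ω)))) ∂P with hB_def
  -- transfer of laws
  have hmapA : ∫⁻ ω, ENNReal.ofReal (Real.exp (l * F (ξ' ω))) ∂P = A := by
    rw [hA_def, ← lintegral_map hexp1 hξ', ← lintegral_map hexp1 hξ, hid]
  have hmapB : ∫⁻ ω, ENNReal.ofReal (Real.exp (-(l * F (ξ' ω)))) ∂P = B := by
    rw [hB_def, ← lintegral_map hexp2 hξ', ← lintegral_map hexp2 hξ, hid]
  -- independence: product formulas
  have hG1 : ∫⁻ ω, ENNReal.ofReal (Real.exp (l * (F (ξ ω) - F (ξ' ω)))) ∂P = A * B := by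
    have hptw : ∀ ω, ENNReal.ofReal (Real.exp (l * (F (ξ ω) - F (ξ' ω)))) =
        ((fun x => ENNReal.ofReal (Real.exp (l * F x))) ∘ ξ) ω *
          ((fun x => ENNReal.ofReal (Real.exp (-(l * F x)))) ∘ ξ') ω := by
      intro ω
      simp only [Function.comp_apply]
      rw [← ENNReal.ofReal_mul (Real.exp_nonneg _), ← Real.exp_add]
      congr 2
      ring
    calc ∫⁻ ω, ENNReal.ofReal (Real.exp (l * (F (ξ ω) - F (ξ' ω)))) ∂P
        = ∫⁻ ω, (((fun x => ENNReal.ofReal (Real.exp (l * F x))) ∘ ξ) *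
            ((fun x => ENNReal.ofReal (Real.exp (-(l * F x)))) ∘ ξ')) ω ∂P := by
          exact lintegral_congr hptw
      _ = (∫⁻ ω, ((fun x => ENNReal.ofReal (Real.exp (l * F x))) ∘ ξ) ω ∂P) *
            ∫⁻ ω, ((fun x => ENNReal.ofReal (Real.exp (-(l * F x)))) ∘ ξ') ω ∂P :=
          lintegral_mul_eq_lintegral_mul_lintegral_of_indepFun (hexp1.comp hξ)
            (hexp2.comp hξ') (hind.comp hexp1 hexp2)
      _ = A * B := by rw [Function.comp_def, Function.comp_def, hmapB]
  have hG2 : ∫⁻ ω, ENNReal.ofReal (Real.exp (-(l * (F (ξ ω) - F (ξ' ω))))) ∂P = A * B := by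
    have hptw : ∀ ω, ENNReal.ofReal (Real.exp (-(l * (F (ξ ω) - F (ξ' ω))))) =
        ((fun x => ENNReal.ofReal (Real.exp (-(l * F x)))) ∘ ξ) ω *
          ((fun x => ENNReal.ofReal (Real.exp (l * F x))) ∘ ξ') ω := by
      intro ω
      simp only [Function.comp_apply]
      rw [← ENNReal.ofReal_mul (Real.exp_nonneg _), ← Real.exp_add]
      congr 2
      ring
    calc ∫⁻ ω, ENNReal.ofReal (Real.exp (-(l * (F (ξ ω) - F (ξ' ω))))) ∂P
        = ∫⁻ ω, (((fun x => ENNReal.ofReal (Real.exp (-(l * F x)))) ∘ ξ) *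
            ((fun x => ENNReal.ofReal (Real.exp (l * F x))) ∘ ξ')) ω ∂P :=
          lintegral_congr hptw
      _ = (∫⁻ ω, ((fun x => ENNReal.ofReal (Real.exp (-(l * F x)))) ∘ ξ) ω ∂P) *
            ∫⁻ ω, ((fun x => ENNReal.ofReal (Real.exp (l * F x))) ∘ ξ') ω ∂P :=
          lintegral_mul_eq_lintegral_mul_lintegral_of_indepFun (hexp2.comp hξ)
            (hexp1.comp hξ') (hind.comp hexp2 hexp1)
      _ = A * B := by rw [Function.comp_def, Function.comp_def, hmapA, mul_comm]
  -- the series bound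
  have hint : ∀ k : ℕ, Integrable (fun ω => (|l| * D ω) ^ (2 * k) / ((2 * k).factorial : ℝ)) P := by
    intro k
    rcases Nat.eq_zero_or_pos k with hk | hk
    · subst hk; simpa using integrable_const (1 : ℝ)
    · have h1 : Integrable (fun ω => |l| ^ (2 * k) * D ω ^ (2 * k) / ((2 * k).factorial : ℝ)) P :=
        ((hmom k hk).const_mul _).div_const _
      exact h1.congr (Filter.Eventually.of_forall fun ω => by simp [mul_pow])
  have hterm : ∀ k : ℕ, ∫ ω, (|l| * D ω) ^ (2 * k) / ((2 * k).factorial : ℝ) ∂P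
      ≤ (l ^ 2 * S) ^ k / (k.factorial : ℝ) := by
    intro k
    have heval : ∫ ω, (|l| * D ω) ^ (2 * k) / ((2 * k).factorial : ℝ) ∂P
        = (l ^ 2) ^ k * ((∫ ω, D ω ^ (2 * k) ∂P) / ((2 * k).factorial : ℝ)) := by
      have habs : ∀ ω : Ω, (|l| * D ω) ^ (2 * k) / ((2 * k).factorial : ℝ)
          = (l ^ 2) ^ k * (D ω ^ (2 * k) / ((2 * k).factorial : ℝ)) := by
        intro ω
        rw [mul_pow, pow_mul |l| 2 k, sq_abs, mul_div_assoc]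
      simp_rw [habs]
      rw [integral_const_mul, integral_div]
    rw [heval]
    rcases Nat.eq_zero_or_pos k with hk | hk
    · subst hk; simp
    · calc (l ^ 2) ^ k * ((∫ ω, D ω ^ (2 * k) ∂P) / ((2 * k).factorial : ℝ))
          ≤ (l ^ 2) ^ k * (S ^ k / (k.factorial : ℝ)) :=
            mul_le_mul_of_nonneg_left (hSk k hk) (by positivity)
        _ = (l ^ 2 * S) ^ k / (k.factorial : ℝ) := by rw [mul_pow]; ring
  have hcoshInt : ∫⁻ ω, ENNReal.ofReal (Real.exp (|l| * D ω) + Real.exp (-(|l| * D ω))) ∂P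
      ≤ 2 * ENNReal.ofReal (Real.exp (C * l ^ 2 / 2)) := by
    have hptw : ∀ ω, ENNReal.ofReal (Real.exp (|l| * D ω) + Real.exp (-(|l| * D ω)))
        = ∑' k : ℕ, 2 * ENNReal.ofReal ((|l| * D ω) ^ (2 * k) / ((2 * k).factorial : ℝ)) := by
      intro ω
      rw [aux_cosh_series, ENNReal.ofReal_mul (by norm_num),
        ENNReal.ofReal_tsum_of_nonneg (fun k => by positivity) (aux_summable_even _),
        ← ENNReal.tsum_mul_left]
      norm_num
    have hmeas_k : ∀ k : ℕ, AEMeasurable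
        (fun ω => 2 * ENNReal.ofReal ((|l| * D ω) ^ (2 * k) / ((2 * k).factorial : ℝ))) P :=
      fun k => ((((hDm.const_mul |l|).pow_const (2*k)).div_const _).ennreal_ofReal).const_mul 2
    calc ∫⁻ ω, ENNReal.ofReal (Real.exp (|l| * D ω) + Real.exp (-(|l| * D ω))) ∂P
        = ∑' k : ℕ, ∫⁻ ω, 2 * ENNReal.ofReal ((|l| * D ω) ^ (2 * k) / ((2 * k).factorial : ℝ)) ∂P := by
          rw [← lintegral_tsum hmeas_k]
          exact lintegral_congr hptw
      _ = ∑' k : ℕ, 2 * ENNReal.ofReal (∫ ω, (|l| * D ω) ^ (2 * k) / ((2 * k).factorial : ℝ) ∂P) := by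
          congr 1
          ext k
          rw [lintegral_const_mul'' 2 (((hDm.const_mul |l|).pow_const (2*k)).div_const _).ennreal_ofReal,
            ofReal_integral_eq_lintegral_ofReal (hint k)
              (Filter.Eventually.of_forall fun ω => by positivity)]
      _ ≤ ∑' k : ℕ, 2 * ENNReal.ofReal ((l ^ 2 * S) ^ k / (k.factorial : ℝ)) :=
          ENNReal.tsum_le_tsum fun k => mul_le_mul_right (ENNReal.ofReal_le_ofReal (hterm k)) 2
      _ = 2 * ENNReal.ofReal (Real.exp (l ^ 2 * S)) := by
          rw [ENNReal.tsum_mul_left, aux_exp_tsum (l ^ 2 * S),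
            ENNReal.ofReal_tsum_of_nonneg (fun k => by positivity)
              (Real.summable_pow_div_factorial _)]
      _ = 2 * ENNReal.ofReal (Real.exp (C * l ^ 2 / 2)) := by
          rw [hS_def]; ring_nf
  -- combine: A * B ≤ ofReal (exp (C l² / 2))
  have hABle : A * B ≤ ENNReal.ofReal (Real.exp (C * l ^ 2 / 2)) := by
    have hmeasG : Measurable fun ω => ENNReal.ofReal (Real.exp (l * (F (ξ ω) - F (ξ' ω)))) :=
      ENNReal.measurable_ofReal.comp (Real.measurable_exp.comp ((hFξ.sub hFξ').const_mul l))
    have hsum : A * B + A * B = ∫⁻ ω, (ENNReal.ofReal (Real.exp (l * (F (ξ ω) - F (ξ' ω)))) +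
        ENNReal.ofReal (Real.exp (-(l * (F (ξ ω) - F (ξ' ω)))))) ∂P := by
      rw [lintegral_add_left hmeasG, hG1, hG2]
    have hle : ∫⁻ ω, (ENNReal.ofReal (Real.exp (l * (F (ξ ω) - F (ξ' ω)))) +
        ENNReal.ofReal (Real.exp (-(l * (F (ξ ω) - F (ξ' ω)))))) ∂P
        ≤ 2 * ENNReal.ofReal (Real.exp (C * l ^ 2 / 2)) := by
      refine le_trans (lintegral_mono fun ω => ?_) hcoshInt
      rw [← ENNReal.ofReal_add (Real.exp_nonneg _) (Real.exp_nonneg _)]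
      apply ENNReal.ofReal_le_ofReal
      apply aux_cosh_mono
      rw [abs_mul]
      exact mul_le_mul_of_nonneg_left (hlip _ _) (abs_nonneg l)
    have h2 : 2 * (A * B) ≤ 2 * ENNReal.ofReal (Real.exp (C * l ^ 2 / 2)) := by
      rw [two_mul]
      exact hsum ▸ hsum.symm ▸ le_trans (le_of_eq hsum) hle
    exact (ENNReal.mul_le_mul_iff_right two_ne_zero ENNReal.ofNat_ne_top).1 h2
  -- conclusion
  by_cases hInt : Integrable (fun ω => Real.exp (l * F (ξ ω))) P
  swap
  · rw [integral_undef hInt]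
    positivity
  have hA_eq : ENNReal.ofReal (∫ ω, Real.exp (l * F (ξ ω)) ∂P) = A :=
    ofReal_integral_eq_lintegral_ofReal hInt
      (Filter.Eventually.of_forall fun ω => (Real.exp_pos _).le)
  have hIpos : 0 < ∫ ω, Real.exp (l * F (ξ ω)) ∂P := by
    rw [integral_pos_iff_support_of_nonneg (fun ω => (Real.exp_pos _).le) hInt]
    have : Function.support (fun ω => Real.exp (l * F (ξ ω))) = Set.univ := by
      ext ω; simp [Function.mem_support, (Real.exp_pos _).ne']
    rw [this]
    simp
  have hA_pos : 0 < A := hA_eq ▸ ENNReal.ofReal_pos.2 hIpos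
  rcases eq_or_ne l 0 with hl | hl
  · subst hl
    simp only [zero_mul, Real.exp_zero, integral_const, measure_univ, ENNReal.toReal_one, probReal_univ,
      smul_eq_mul, one_mul]
    have : C * 0 ^ 2 / 2 = 0 := by ring
    rw [this, Real.exp_zero]
  have hBfin : B ≠ ⊤ := by
    intro htop
    have h1 : A * B = ⊤ := by rw [htop]; exact ENNReal.mul_top hA_pos.ne'
    rw [h1, top_le_iff] at hABle
    exact ENNReal.ofReal_ne_top hABle
  have hIntB : Integrable (fun ω => Real.exp (-(l * F (ξ ω)))) P := by
    refine ⟨(Real.measurable_exp.comp (hFξ.const_mul l).neg).aestronglyMeasurable, ?_⟩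
    rw [hasFiniteIntegral_iff_ofReal (Filter.Eventually.of_forall fun ω => (Real.exp_pos _).le)]
    exact lt_top_iff_ne_top.2 hBfin
  have hIntF : Integrable (fun ω => F (ξ ω)) P := by
    have hl' : 0 < |l| := abs_pos.2 hl
    refine ((hInt.add hIntB).const_mul |l|⁻¹).mono' hFξ.aestronglyMeasurable
      (Filter.Eventually.of_forall fun ω => ?_)
    set t := F (ξ ω) with ht
    have h2 : |l * t| ≤ Real.exp (l * t) + Real.exp (-(l * t)) := by
      rcases le_or_gt 0 (l * t) with h | h
      · have h3 := Real.add_one_le_exp (l * t)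
        have h4 := Real.exp_pos (-(l * t))
        rw [abs_of_nonneg h]; linarith
      · have h3 := Real.add_one_le_exp (-(l * t))
        have h4 := Real.exp_pos (l * t)
        rw [abs_of_neg h]; linarith
    have h5 : ‖t‖ = |l|⁻¹ * |l * t| := by
      rw [Real.norm_eq_abs, abs_mul]
      field_simp
    have h6 : |l|⁻¹ * |l * t| ≤ |l|⁻¹ * (Real.exp (l * t) + Real.exp (-(l * t))) :=
      mul_le_mul_of_nonneg_left h2 (inv_nonneg.2 hl'.le)
    simp only [Pi.add_apply]
    rw [h5]
    exact h6
  have hJen : 1 ≤ ∫ ω, Real.exp (-(l * F (ξ ω))) ∂P := by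
    have hgi : Integrable (fun ω => Real.exp ((-l) * F (ξ ω))) P := by
      refine hIntB.congr (Filter.Eventually.of_forall fun ω => ?_)
      exact congrArg Real.exp (by ring)
    have h := convexOn_exp.map_integral_le (μ := P) (s := Set.univ) (g := Real.exp)
      (f := fun ω => (-l) * F (ξ ω))
      Real.continuous_exp.continuousOn isClosed_univ
      (Filter.Eventually.of_forall fun ω => Set.mem_univ _)
      (hIntF.const_mul (-l)) (by exact hgi)
    rw [integral_const_mul, hmean, mul_zero, Real.exp_zero] at h
    refine le_trans h (le_of_eq (integral_congr_ae (Filter.Eventually.of_forall fun ω => ?_)))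
    exact congrArg Real.exp (by ring)
  have hB_ge : 1 ≤ B := by
    have hB_eq : ENNReal.ofReal (∫ ω, Real.exp (-(l * F (ξ ω))) ∂P) = B :=
      ofReal_integral_eq_lintegral_ofReal hIntB
        (Filter.Eventually.of_forall fun ω => (Real.exp_pos _).le)
    calc (1 : ℝ≥0∞) = ENNReal.ofReal 1 := ENNReal.ofReal_one.symm
      _ ≤ ENNReal.ofReal (∫ ω, Real.exp (-(l * F (ξ ω))) ∂P) := ENNReal.ofReal_le_ofReal hJen
      _ = B := hB_eq
  have hfinal : A ≤ ENNReal.ofReal (Real.exp (C * l ^ 2 / 2)) :=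
    le_trans (le_mul_of_one_le_right zero_le hB_ge) hABle
  rw [← hA_eq] at hfinal
  exact (ENNReal.ofReal_le_ofReal_iff (Real.exp_pos _).le).1 hfinal


end
end

section
/- (Lemma 5.1.) Let E be a separable Banach space and H a separable Hilbert space continuously embedded in E. Define the extended pseudo-metric d_H on E by d_H(x,y) = ‖x−y‖_H if x−y ∈ H and d_H(x,y) = +∞ otherwise. Let X be an E-valued random variable and h ∈ H. Then W_2^{d_H}(ℙ_X, ℙ_{X+h}) = ‖h‖_H, where ℙ_X denotes the law of X and ℙ_{X+h} the law of X + h. -/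
open MeasureTheory ProbabilityTheory ENNReal

noncomputable section

open scoped RealInnerProductSpace

-- clamp lemmas
lemma clamp_lip (M a b : ℝ) : |max (min a M) (-M) - max (min b M) (-M)| ≤ |a - b| := by
  have hl : LipschitzWith 1 (fun t : ℝ => max (min t M) (-M)) :=
    (LipschitzWith.id.min_const M).max_const (-M)
  have := hl.dist_le_mul a b
  simpa [Real.dist_eq] using this

lemma clamp_eq_self {M t : ℝ} (h1 : -M ≤ t) (h2 : t ≤ M) : max (min t M) (-M) = t := by
  rw [min_eq_left h2, max_eq_left h1]

lemma clamp_mono (M : ℝ) {a b : ℝ} (hab : a ≤ b) :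
    max (min a M) (-M) ≤ max (min b M) (-M) :=
  max_le_max (min_le_min_right M hab) le_rfl

lemma clamp_abs_le (M t : ℝ) (hM : 0 ≤ M) : |max (min t M) (-M)| ≤ M := by
  rw [abs_le]
  constructor
  · exact le_max_right _ _
  · exact max_le (min_le_right _ _) (by linarith)

lemma dual_approx {E H : Type*} [NormedAddCommGroup E] [NormedSpace ℝ E]
    [NormedAddCommGroup H] [InnerProductSpace ℝ H] [CompleteSpace H]
    (ι : H →L[ℝ] E) (hι : Function.Injective ι) (h : H) {ε : ℝ} (hε : 0 < ε) :
    ∃ f : E →L[ℝ] ℝ, (∀ z : H, |f (ι z)| ≤ ‖z‖) ∧ ‖h‖ - ε ≤ f (ι h) := by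
  by_cases hh : h = 0
  · exact ⟨0, by simp, by simp [hh]; linarith⟩
  have hhn : (0:ℝ) < ‖h‖ := norm_pos_iff.mpr hh
  -- the submodule of representable functionals
  set S : Submodule ℝ H :=
    { carrier := {u | ∃ f : E →L[ℝ] ℝ, ∀ z : H, f (ι z) = ⟪u, z⟫}
      add_mem' := by
        rintro u v ⟨f, hf⟩ ⟨g, hg⟩
        exact ⟨f + g, fun z => by simp [hf z, hg z, inner_add_left]⟩
      zero_mem' := ⟨0, fun z => by simp⟩
      smul_mem' := by
        rintro c u ⟨f, hf⟩
        exact ⟨c • f, fun z => by simp [hf z, real_inner_smul_left]⟩ } with hS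
  have hSbot : Sᗮ = ⊥ := by
    rw [Submodule.eq_bot_iff]
    intro w hw
    by_contra hw0
    have hιw : ι w ≠ 0 := fun hc => hw0 (hι (by simpa using hc))
    obtain ⟨f, hf1, hf2⟩ := exists_dual_vector ℝ (ι w) (norm_ne_zero_iff.mpr hιw)
    set u : H := (InnerProductSpace.toDual ℝ H).symm (f.comp ι) with hu
    have huS : u ∈ S := ⟨f, fun z => by
      simp [hu, InnerProductSpace.toDual_symm_apply]⟩
    have := (Submodule.mem_orthogonal S w).mp hw u huS
    have hfw : f (ι w) = 0 := by
      have : ⟪u, w⟫ = f (ι w) := by simp [hu, InnerProductSpace.toDual_symm_apply]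
      linarith [this]
    rw [hf2] at hfw
    exact hιw (norm_eq_zero.mp (by exact_mod_cast hfw))
  have hdense : Dense (S : Set H) := by
    have : S.topologicalClosure = ⊤ := by
      rw [← Submodule.orthogonal_orthogonal_eq_closure, hSbot, Submodule.bot_orthogonal_eq_top]
    exact Submodule.dense_iff_topologicalClosure_eq_top.mpr this
  set δ : ℝ := ε / (2 * ‖h‖) with hδ
  have hδ0 : 0 < δ := by positivity
  obtain ⟨u, huS, hud⟩ := hdense.exists_dist_lt ((‖h‖)⁻¹ • h) hδ0
  obtain ⟨f, hf⟩ := huS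
  have hun : ‖u‖ ≤ 1 + δ := by
    have h1 : ‖(‖h‖)⁻¹ • h‖ = 1 := by
      rw [norm_smul]; simp [abs_of_pos (inv_pos.mpr hhn), inv_mul_cancel₀ hhn.ne']
    calc ‖u‖ ≤ ‖u - (‖h‖)⁻¹ • h‖ + ‖(‖h‖)⁻¹ • h‖ := by have := norm_add_le (u - (‖h‖)⁻¹ • h) ((‖h‖)⁻¹ • h); simpa using this
    _ ≤ δ + 1 := by
        rw [h1]
        have := hud
        rw [dist_comm, dist_eq_norm] at this
        linarith
    _ = 1 + δ := by ring
  have huh : ‖h‖ - δ * ‖h‖ ≤ ⟪u, h⟫ := by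
    have h1 : ⟪(‖h‖)⁻¹ • h, h⟫ = ‖h‖ := by
      rw [real_inner_smul_left, real_inner_self_eq_norm_mul_norm]
      field_simp
    have h2 : |⟪u - (‖h‖)⁻¹ • h, h⟫| ≤ δ * ‖h‖ := by
      calc |⟪u - (‖h‖)⁻¹ • h, h⟫| ≤ ‖u - (‖h‖)⁻¹ • h‖ * ‖h‖ := abs_real_inner_le_norm _ _
      _ ≤ δ * ‖h‖ := by
          apply mul_le_mul_of_nonneg_right _ (norm_nonneg _)
          rw [dist_comm, dist_eq_norm] at hud; linarith
    have h3 : ⟪u - (‖h‖)⁻¹ • h, h⟫ = ⟪u, h⟫ - ‖h‖ := by rw [inner_sub_left, h1]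
    have := abs_le.mp h2
    linarith [this.1]
  refine ⟨(1 / (1 + δ)) • f, fun z => ?_, ?_⟩
  · have : |f (ι z)| = |⟪u, z⟫| := by rw [hf z]
    have h2 : |⟪u, z⟫| ≤ ‖u‖ * ‖z‖ := abs_real_inner_le_norm _ _
    have h3 : (0:ℝ) < 1 + δ := by linarith
    simp only [ContinuousLinearMap.smul_apply, smul_eq_mul, abs_mul]
    rw [abs_of_pos (by positivity : (0:ℝ) < 1 / (1 + δ))]
    calc 1 / (1 + δ) * |f (ι z)| ≤ 1 / (1 + δ) * ((1 + δ) * ‖z‖) := by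
          apply mul_le_mul_of_nonneg_left _ (by positivity)
          rw [this]
          calc |⟪u, z⟫| ≤ ‖u‖ * ‖z‖ := h2
          _ ≤ (1 + δ) * ‖z‖ := mul_le_mul_of_nonneg_right hun (norm_nonneg _)
    _ = ‖z‖ := by field_simp
  · simp only [ContinuousLinearMap.smul_apply, smul_eq_mul, hf h]
    have h3 : (0:ℝ) < 1 + δ := by linarith
    rw [div_mul_eq_mul_div, one_mul, le_div_iff₀ h3]
    have hδε : δ * ‖h‖ = ε / 2 := by rw [hδ]; field_simp
    nlinarith [huh, hε, hδ0, hhn]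

lemma dH_val {E H : Type*} [NormedAddCommGroup E] [NormedSpace ℝ E]
    [NormedAddCommGroup H] [InnerProductSpace ℝ H]
    (ι : H →L[ℝ] E) (hι : Function.Injective ι) (x y : E) (z : H) (hz : ι z = x - y) :
    (⨅ (w : H) (_ : ι w = x - y), ENNReal.ofReal ‖w‖) = ENNReal.ofReal ‖z‖ := by
  apply le_antisymm
  · exact iInf₂_le z hz
  · refine le_iInf₂ fun w hw => ?_
    have : w = z := hι (by rw [hw, hz])
    rw [this]


/-- **Lemma 5.1**: translating a law by an element `h` of a continuously embedded Hilbert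
space `H` moves it exactly `‖h‖_H` in the Wasserstein distance associated to the extended
Cameron–Martin-type pseudo-metric `d_H`. -/
theorem wasserstein_dH_translate
    {E H : Type*} [NormedAddCommGroup E] [NormedSpace ℝ E] [SecondCountableTopology E]
    [MeasurableSpace E] [BorelSpace E]
    [NormedAddCommGroup H] [InnerProductSpace ℝ H] [CompleteSpace H]
    [SecondCountableTopology H]
    (ι : H →L[ℝ] E) (hι : Function.Injective ι)
    {Ω : Type*} [MeasurableSpace Ω] (P : Measure Ω) [IsProbabilityMeasure P]
    (X : Ω → E) (hX : Measurable X) (h : H) :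
    wassersteinDistE 2
      (fun x y : E => ⨅ (z : H) (_ : ι z = x - y), ENNReal.ofReal ‖z‖)
      (P.map X) (P.map fun ω => X ω + ι h) = ENNReal.ofReal ‖h‖ := by
  classical
  set d : E → E → ℝ≥0∞ := fun x y => ⨅ (z : H) (_ : ι z = x - y), ENNReal.ofReal ‖z‖ with hd
  have hXh : Measurable fun ω => X ω + ι h := hX.add_const _
  haveI : IsProbabilityMeasure (P.map X) := Measure.isProbabilityMeasure_map hX.aemeasurable
  haveI : IsProbabilityMeasure (P.map fun ω => X ω + ι h) :=
    Measure.isProbabilityMeasure_map hXh.aemeasurable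
  apply le_antisymm
  · -- upper bound
    set g0 : Ω → E × E := fun ω => (X ω, X ω + ι h) with hg0
    have hg0m : Measurable g0 := hX.prodMk hXh
    set π0 := P.map g0 with hπ0
    haveI : IsProbabilityMeasure π0 := Measure.isProbabilityMeasure_map hg0m.aemeasurable
    have hcoup : IsCoupling π0 (P.map X) (P.map fun ω => X ω + ι h) := by
      constructor
      · rw [hπ0, Measure.map_map measurable_fst hg0m]; rfl
      · rw [hπ0, Measure.map_map measurable_snd hg0m]; rfl
    have hint : ∫⁻ z, d z.1 z.2 ^ (2:ℝ) ∂π0 = ENNReal.ofReal ‖h‖ ^ (2:ℝ) := by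
      have hS : MeasurableSet {z : E × E | z.2 = z.1 + ι h} :=
        (isClosed_eq continuous_snd (continuous_fst.add continuous_const)).measurableSet
      have hae : ∀ᵐ z ∂π0, z.2 = z.1 + ι h := by
        rw [hπ0, ae_map_iff hg0m.aemeasurable hS]
        filter_upwards with ω
        simp [hg0]
      calc ∫⁻ z, d z.1 z.2 ^ (2:ℝ) ∂π0 = ∫⁻ _, ENNReal.ofReal ‖h‖ ^ (2:ℝ) ∂π0 := by
            apply lintegral_congr_ae
            filter_upwards [hae] with z hz
            have : d z.1 z.2 = ENNReal.ofReal ‖(-h : H)‖ :=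
              dH_val ι hι z.1 z.2 (-h) (by rw [hz]; simp)
            rw [this, norm_neg]
      _ = ENNReal.ofReal ‖h‖ ^ (2:ℝ) := by simp
    have hle : wassersteinDistE 2 d (P.map X) (P.map fun ω => X ω + ι h)
        ≤ (∫⁻ z, d z.1 z.2 ^ (2:ℝ) ∂π0) ^ ((1:ℝ)/2) := by
      rw [wassersteinDistE]
      exact iInf₂_le π0 hcoup
    refine hle.trans (le_of_eq ?_)
    rw [hint, ← ENNReal.rpow_mul]
    norm_num
  · -- lower bound
    rw [wassersteinDistE]
    refine le_iInf₂ fun π hcoup => ?_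
    haveI hπprob : IsProbabilityMeasure π := by
      constructor
      have : π Set.univ = (π.map Prod.fst) Set.univ := by
        rw [Measure.map_apply measurable_fst MeasurableSet.univ, Set.preimage_univ]
      rw [this, hcoup.1]
      exact measure_univ
    refine ENNReal.le_of_forall_pos_le_add fun ε hε hb => ?_
    by_cases hhε : ‖h‖ ≤ (ε : ℝ)
    · calc ENNReal.ofReal ‖h‖ ≤ ENNReal.ofReal (ε : ℝ) := ENNReal.ofReal_le_ofReal hhε
      _ = (ε : ℝ≥0∞) := ENNReal.ofReal_coe_nnreal
      _ ≤ _ := le_add_self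
    push_neg at hhε
    have hεR : (0:ℝ) < ε := hε
    obtain ⟨f, hf1, hf2⟩ := dual_approx ι hι h (half_pos hεR)
    set c : ℝ := f (ι h) with hc
    have hc2 : c ≤ ‖h‖ := (abs_le.mp (hf1 h)).2
    have hc0 : 0 < c := by
      have := hf2
      linarith
    -- truncation level
    set ε2 : ℝ := (ε / 2) / (‖h‖ + 1) with hε2
    have hn0 : (0:ℝ) < ‖h‖ := lt_trans hεR hhε
    have hε20 : 0 < ε2 := by positivity
    have hε21 : ε2 ≤ 1 := by
      rw [hε2, div_le_one (by positivity)]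
      linarith
    set A : ℕ → Set Ω := fun n => {ω | |f (X ω)| ≤ (n:ℝ)} with hA
    have hfXm : Measurable fun ω => |f (X ω)| := (f.continuous.measurable.comp hX).abs
    have hAmeas : ∀ n, MeasurableSet (A n) := fun n =>
      measurableSet_le hfXm measurable_const
    have hAmono : Monotone A := by
      intro n m hnm ω hω
      simp only [hA, Set.mem_setOf_eq] at hω ⊢
      exact le_trans hω (by exact_mod_cast (Nat.cast_le (α := ℝ)).mpr hnm)
    have hAunion : (⋃ n, A n) = Set.univ := by
      ext ω
      simp only [Set.mem_iUnion, Set.mem_univ, iff_true, hA, Set.mem_setOf_eq]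
      exact exists_nat_ge _
    have htend : Filter.Tendsto (fun n => P (A n)) Filter.atTop (nhds 1) := by
      have := tendsto_measure_iUnion_atTop (μ := P) hAmono
      rwa [hAunion, measure_univ] at this
    have hlt1 : 1 - ENNReal.ofReal ε2 < 1 :=
      ENNReal.sub_lt_self one_ne_top one_ne_zero
        (by simp [ENNReal.ofReal_eq_zero, not_le, hε20])
    obtain ⟨n, hn⟩ := (htend.eventually (eventually_gt_nhds hlt1)).exists
    -- the truncated test function
    set M' : ℝ := (n:ℝ) + c with hM'
    have hM'0 : 0 ≤ M' := by positivity
    set g : E → ℝ := fun x => max (min (f x) M') (-M') with hg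
    have hgc : Continuous g := (f.continuous.min continuous_const).max continuous_const
    -- pointwise bound
    have hkey : ∀ ω, Set.indicator (A n) (fun _ => c) ω ≤ g (X ω + ι h) - g (X ω) := by
      intro ω
      have hfadd : f (X ω + ι h) = f (X ω) + c := by rw [map_add]
      by_cases hω : ω ∈ A n
      · rw [Set.indicator_of_mem hω]
        obtain ⟨hb1, hb2⟩ := abs_le.mp (show |f (X ω)| ≤ (n:ℝ) from hω)
        have e1 : g (X ω) = f (X ω) := clamp_eq_self (by simp only [hM']; linarith) (by simp only [hM']; linarith)
        have e2 : g (X ω + ι h) = f (X ω) + c := by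
          rw [hg]; simp only [hfadd]
          exact clamp_eq_self (by simp only [hM']; linarith) (by simp only [hM']; linarith)
        rw [e1, e2]; linarith
      · rw [Set.indicator_of_notMem hω]
        have : g (X ω) ≤ g (X ω + ι h) := by
          rw [hg]
          exact clamp_mono M' (by rw [hfadd]; linarith)
        linarith
    -- integrability facts
    have hbound : ∀ x : E, |g x| ≤ M' := fun x => clamp_abs_le M' (f x) hM'0
    have hint1 : Integrable (fun ω => g (X ω)) P :=
      Integrable.mono' (integrable_const M') (hgc.measurable.comp hX).aestronglyMeasurable
        (Filter.Eventually.of_forall fun ω => by simpa using hbound (X ω))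
    have hint2 : Integrable (fun ω => g (X ω + ι h)) P :=
      Integrable.mono' (integrable_const M') (hgc.measurable.comp hXh).aestronglyMeasurable
        (Filter.Eventually.of_forall fun ω => by simpa using hbound (X ω + ι h))
    have hq1 : Integrable (fun z : E × E => g z.1) π :=
      Integrable.mono' (integrable_const M')
        (hgc.measurable.comp measurable_fst).aestronglyMeasurable
        (Filter.Eventually.of_forall fun z => by simpa using hbound z.1)
    have hq2 : Integrable (fun z : E × E => g z.2) π :=
      Integrable.mono' (integrable_const M')
        (hgc.measurable.comp measurable_snd).aestronglyMeasurable
        (Filter.Eventually.of_forall fun z => by simpa using hbound z.2)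
    have hGint : Integrable (fun ω => g (X ω + ι h) - g (X ω)) P := hint2.sub hint1
    have hindint : Integrable (Set.indicator (A n) fun _ => c) P :=
      (integrable_const c).indicator (hAmeas n)
    -- lower bound on the integral
    have ha1 : (P (A n)).toReal * c ≤ ∫ ω, (g (X ω + ι h) - g (X ω)) ∂P := by
      have := integral_mono hindint hGint hkey
      rwa [integral_indicator_const c (hAmeas n), smul_eq_mul] at this
    have htoReal : 1 - ε2 ≤ (P (A n)).toReal := by
      have hle : ENNReal.ofReal ε2 ≤ 1 := by
        rw [← ENNReal.ofReal_one]
        exact ENNReal.ofReal_le_ofReal hε21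
      have := ENNReal.toReal_mono (measure_ne_top P (A n)) hn.le
      rwa [ENNReal.toReal_sub_of_le hle one_ne_top, ENNReal.toReal_one,
        ENNReal.toReal_ofReal hε20.le] at this
    have hε2c : ε2 * (‖h‖ + 1) = ε / 2 := by
      rw [hε2]; field_simp
    have haG : ‖h‖ - ε ≤ ∫ ω, (g (X ω + ι h) - g (X ω)) ∂P := by
      have h1 : (1 - ε2) * c ≤ (P (A n)).toReal * c :=
        mul_le_mul_of_nonneg_right htoReal hc0.le
      have h2 : c - ε / 2 ≤ (1 - ε2) * c := by nlinarith
      have h3 : ‖h‖ - (ε:ℝ) ≤ c - (ε:ℝ) / 2 := by linarith [hf2]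
      linarith
    -- transfer to π
    have hsplit : ∫ z : E × E, (g z.2 - g z.1) ∂π = ∫ ω, (g (X ω + ι h) - g (X ω)) ∂P := by
      rw [integral_sub hq2 hq1, integral_sub hint2 hint1]
      congr 1
      · calc ∫ z : E × E, g z.2 ∂π = ∫ y, g y ∂(π.map Prod.snd) :=
              (integral_map measurable_snd.aemeasurable hgc.aestronglyMeasurable).symm
        _ = ∫ y, g y ∂(P.map fun ω => X ω + ι h) := by rw [hcoup.2]
        _ = ∫ ω, g (X ω + ι h) ∂P := integral_map hXh.aemeasurable hgc.aestronglyMeasurable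
      · calc ∫ z : E × E, g z.1 ∂π = ∫ y, g y ∂(π.map Prod.fst) :=
              (integral_map measurable_fst.aemeasurable hgc.aestronglyMeasurable).symm
        _ = ∫ y, g y ∂(P.map X) := by rw [hcoup.1]
        _ = ∫ ω, g (X ω) ∂P := integral_map hX.aemeasurable hgc.aestronglyMeasurable
    set a : ℝ := ∫ z : E × E, (g z.2 - g z.1) ∂π with haa
    have ha : ‖h‖ - (ε:ℝ) ≤ a := le_of_le_of_eq haG hsplit.symm
    -- the ennreal chain
    set F : E × E → ℝ≥0∞ := fun z => ENNReal.ofReal (g z.2 - g z.1) with hF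
    have hG2c : Continuous fun z : E × E => g z.2 - g z.1 :=
      (hgc.comp continuous_snd).sub (hgc.comp continuous_fst)
    have hFm : Measurable F := hG2c.measurable.ennreal_ofReal
    have hG2pint : Integrable (fun z : E × E => max (g z.2 - g z.1) 0) π :=
      Integrable.mono' (integrable_const (2 * M'))
        (hG2c.max continuous_const).aestronglyMeasurable
        (Filter.Eventually.of_forall fun z => by
          rw [Real.norm_eq_abs, abs_of_nonneg (le_max_right _ _)]
          have b1 := hbound z.1
          have b2 := hbound z.2
          rw [abs_le] at b1 b2
          apply max_le <;> [skip; positivity]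
          linarith [b1.1, b1.2, b2.1, b2.2])
    have step1 : ENNReal.ofReal a ≤ ∫⁻ z, F z ∂π := by
      have hmon : a ≤ ∫ z : E × E, max (g z.2 - g z.1) 0 ∂π := by
        rw [haa]
        exact integral_mono (hq2.sub hq1) hG2pint fun z => le_max_left _ _
      calc ENNReal.ofReal a ≤ ENNReal.ofReal (∫ z : E × E, max (g z.2 - g z.1) 0 ∂π) :=
            ENNReal.ofReal_le_ofReal hmon
      _ = ∫⁻ z, ENNReal.ofReal (max (g z.2 - g z.1) 0) ∂π :=
            ofReal_integral_eq_lintegral_ofReal hG2pint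
              (Filter.Eventually.of_forall fun z => le_max_right _ _)
      _ = ∫⁻ z, F z ∂π := by
            refine lintegral_congr fun z => ?_
            simp only [hF]
            rcases le_total (g z.2 - g z.1) 0 with ht | ht
            · rw [max_eq_right ht, ENNReal.ofReal_zero, ENNReal.ofReal_of_nonpos ht]
            · rw [max_eq_left ht]
    have step2 : ∫⁻ z, F z ∂π ≤ (∫⁻ z, F z ^ (2:ℝ) ∂π) ^ ((1:ℝ)/2) := by
      have hconj : Real.HolderConjugate 2 2 := Real.HolderConjugate.two_two
      have := ENNReal.lintegral_mul_le_Lp_mul_Lq π hconj hFm.aemeasurable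
        (aemeasurable_const (b := (1:ℝ≥0∞)))
      simpa [ENNReal.one_rpow, lintegral_one, measure_univ] using this
    have hptwise : ∀ z : E × E, F z ≤ d z.1 z.2 := by
      intro z
      refine le_iInf₂ fun w hw => ENNReal.ofReal_le_ofReal ?_
      have hlip := clamp_lip M' (f z.2) (f z.1)
      have h21 : z.2 - z.1 = ι (-w) := by
        rw [map_neg, hw]; abel
      have : |f z.2 - f z.1| = |f (ι (-w))| := by
        rw [← map_sub, h21]
      have h3 : |f z.2 - f z.1| ≤ ‖w‖ := by
        rw [this]
        simpa using hf1 (-w)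
      have h4 : |g z.2 - g z.1| ≤ ‖w‖ := le_trans (by simpa [hg] using hlip) h3
      exact le_trans (le_abs_self _) h4
    have step3 : (∫⁻ z, F z ^ (2:ℝ) ∂π) ^ ((1:ℝ)/2)
        ≤ (∫⁻ z, d z.1 z.2 ^ (2:ℝ) ∂π) ^ ((1:ℝ)/2) := by
      apply ENNReal.rpow_le_rpow _ (by norm_num)
      exact lintegral_mono fun z => ENNReal.rpow_le_rpow (hptwise z) (by norm_num)
    calc ENNReal.ofReal ‖h‖ ≤ ENNReal.ofReal (a + ε) :=
          ENNReal.ofReal_le_ofReal (by linarith)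
    _ ≤ ENNReal.ofReal a + ENNReal.ofReal (ε:ℝ) := ENNReal.ofReal_add_le
    _ = ENNReal.ofReal a + (ε : ℝ≥0∞) := by rw [ENNReal.ofReal_coe_nnreal]
    _ ≤ (∫⁻ z, d z.1 z.2 ^ (2:ℝ) ∂π) ^ ((1:ℝ)/2) + (ε : ℝ≥0∞) := by
          gcongr
          exact le_trans step1 (le_trans step2 step3)

end
end
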